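/- Let G be a dimer model on the torus with quiver Q = (V, A, s, t) its dual quiver, oriented so the white node is on the right of each arrow. If D ⊆ E = A is a perfect matching and the subquiver Q_D with arrow set A \ D has no oriented cycles, then there exists a total order < on V such that A \ D = { a ∈ A : s(a) < t(a) } and D = { a ∈ A : s(a) > t(a) }. -/

import Mathlib

/-!
The arrows outside `D` define a relation on the faces whose transitive closure is a strict order,
precisely because `A \ D` has no oriented cycle; any linear extension of it puts `s a < t a` for
`a ∉ D`. For `a ∈ D`, the path `around a` runs from `t a` back to `s a` around the white node of
`a`, and it avoids `D` because `a` is the only matched edge at that node. Hence `t a < s a`, and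
the two descriptions of `A \ D` and `D` follow by asymmetry.
-/

/-- `IsPath src tgt u v p` : the list of arrows `p` forms a directed path from `u` to `v`. -/
def IsPath {V A : Type*} (src tgt : A → V) : V → V → List A → Prop
  | u, v, [] => u = v
  | u, v, a :: p => src a = u ∧ IsPath src tgt (tgt a) v p

theorem exists_isStrictTotalOrder_of_isStrictOrder {α : Type*} (r : α → α → Prop)
    [IsStrictOrder α r] :
    ∃ lt : α → α → Prop, IsStrictTotalOrder α lt ∧ ∀ a b, r a b → lt a b := by
  let := partialOrderOfSO r
  refine ⟨((· < ·) : LinearExtension α → LinearExtension α → Prop),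
    inferInstanceAs (IsStrictTotalOrder (LinearExtension α) (· < ·)), fun a b hab => ?_⟩
  have hne : a ≠ b := fun h => irrefl_of r a (h ▸ hab)
  exact lt_of_le_of_ne (toLinearExtension.monotone (Or.inr hab : a ≤ b)) hne

namespace IsPath

variable {V A : Type*} {src tgt : A → V}

theorem append : ∀ {p q : List A} {u v w : V}, IsPath src tgt u v p → IsPath src tgt v w q →
    IsPath src tgt u w (p ++ q)
  | [], _, _, _, _, rfl, hq => hq
  | _ :: _, _, _, _, _, ⟨hs, hp⟩, hq => ⟨hs, append hp hq⟩

theorem singleton (a : A) : IsPath src tgt (src a) (tgt a) [a] := ⟨rfl, rfl⟩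

end IsPath

def arrowRel {V A : Type*} (src tgt : A → V) (S : Set A) (u v : V) : Prop :=
  ∃ a ∈ S, src a = u ∧ tgt a = v

theorem transGen_arrowRel_iff {V A : Type*} {src tgt : A → V} {S : Set A} {u v : V} :
    Relation.TransGen (arrowRel src tgt S) u v ↔
      ∃ p : List A, p ≠ [] ∧ (∀ e ∈ p, e ∈ S) ∧ IsPath src tgt u v p := by
  constructor
  · intro h
    induction h with
    | single h =>
      obtain ⟨a, haS, rfl, rfl⟩ := h
      exact ⟨[a], List.cons_ne_nil _ _, by simpa using haS, IsPath.singleton a⟩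
    | tail _ h ih =>
      obtain ⟨p, -, hpS, hp⟩ := ih
      obtain ⟨a, haS, rfl, rfl⟩ := h
      refine ⟨p ++ [a], by simp, ?_, hp.append (IsPath.singleton a)⟩
      simpa [or_imp, forall_and] using ⟨hpS, haS⟩
  · rintro ⟨p, hp0, hpS, hp⟩
    induction p generalizing u with
    | nil => exact absurd rfl hp0
    | cons a p ih =>
      obtain ⟨rfl, hp⟩ := hp
      have hstep : arrowRel src tgt S (src a) (tgt a) := ⟨a, hpS a List.mem_cons_self, rfl, rfl⟩
      rcases eq_or_ne p [] with rfl | hp0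
      · exact (show tgt a = v from hp) ▸ Relation.TransGen.single hstep
      · exact .head hstep (ih hp0 (fun e he => hpS e (List.mem_cons_of_mem a he)) hp)

theorem stmt_0_general {W V A : Type*}
    (src tgt : A → V) (nw : A → W)
    (around : A → List A)
    (h_node : ∀ a, ∀ e ∈ around a, nw e = nw a)
    (h_notself : ∀ a, a ∉ around a)
    (h_nonempty : ∀ a, around a ≠ [])
    (h_path : ∀ a, IsPath src tgt (tgt a) (src a) (around a))
    (D : Set A)
    (hPMw : ∀ y : W, ∃! e, e ∈ D ∧ nw e = y)
    (hacyc : ¬ ∃ (v : V) (p : List A), p ≠ [] ∧ (∀ e ∈ p, e ∉ D) ∧ IsPath src tgt v v p) :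
    ∃ lt : V → V → Prop, IsStrictTotalOrder V lt ∧
      (∀ a, a ∉ D ↔ lt (src a) (tgt a)) ∧
      (∀ a, a ∈ D ↔ lt (tgt a) (src a)) := by
  set r := Relation.TransGen (arrowRel src tgt Dᶜ)
  have : IsStrictOrder V r :=
    { irrefl := fun v hv => hacyc ⟨v, transGen_arrowRel_iff.mp hv⟩
      trans := fun _ _ _ => Relation.TransGen.trans }
  obtain ⟨lt, hlt, hr⟩ := exists_isStrictTotalOrder_of_isStrictOrder r
  have hnotD : ∀ a, a ∉ D → lt (src a) (tgt a) := fun a ha => hr _ _ (.single ⟨a, ha, rfl, rfl⟩)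
  have hinD : ∀ a, a ∈ D → lt (tgt a) (src a) := by
    intro a ha
    have hinj : Set.InjOn nw D := fun e he f hf hef =>
      (hPMw (nw f)).unique ⟨he, hef⟩ ⟨hf, rfl⟩
    refine hr _ _ (transGen_arrowRel_iff.mpr ⟨around a, h_nonempty a, fun e he heD => ?_, h_path a⟩)
    exact h_notself a (hinj heD ha (h_node a e he) ▸ he)
  refine ⟨lt, hlt, fun a => ⟨hnotD a, fun h ha => ?_⟩, fun a => ⟨hinD a, fun h => ?_⟩⟩
  · exact asymm h (hinD a ha)
  · exact not_not.mp fun ha => asymm h (hnotD a ha)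

/-- For a dimer model `G` on the torus (black nodes `B`, white nodes `W`,
edges = arrows `A` of the dual quiver on the faces `V`, with `around a` the path from
`t a` to `s a` going around the white node adjacent to the edge dual to `a`), if
`D` is a perfect matching and the subquiver with arrows `A \ D` has no oriented cycle,
then there is a total order on `V` with `A \ D = {a | s a < t a}` and `D = {a | s a > t a}`. -/
theorem stmt_0 {B W V A : Type*} [Fintype V] [Fintype A]
    (src tgt : A → V) (nb : A → B) (nw : A → W)
    (around : A → List A)
    (h_node : ∀ a, ∀ e ∈ around a, nw e = nw a)
    (h_notself : ∀ a, a ∉ around a)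
    (h_nonempty : ∀ a, around a ≠ [])
    (h_path : ∀ a, IsPath src tgt (tgt a) (src a) (around a))
    (D : Set A)
    (hPMb : ∀ x : B, ∃! e, e ∈ D ∧ nb e = x)
    (hPMw : ∀ y : W, ∃! e, e ∈ D ∧ nw e = y)
    (hacyc : ¬ ∃ (v : V) (p : List A), p ≠ [] ∧ (∀ e ∈ p, e ∉ D) ∧ IsPath src tgt v v p) :
    ∃ lt : V → V → Prop, IsStrictTotalOrder V lt ∧
      (∀ a, a ∉ D ↔ lt (src a) (tgt a)) ∧
      (∀ a, a ∈ D ↔ lt (tgt a) (src a)) :=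
  stmt_0_general src tgt nw around h_node h_notself h_nonempty h_path D hPMw hacyc
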